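/- (Theorem 1, second regime, case c1 > 2c2.) Assume c1 > 2c2. Then for every r with c2t < r ≤ (c1 − c2)t, the distribution function Φ(r) = P(ρ < r) equals H1(r,t) = 1 − e^{−(λ1+λ2)t}·exp((λ1/c1)√(c1²t² − (r − c2t)²)) + (λ1 e^{−(λ1+λ2)t}/(π c1))·∫_{r−c2t}^{r+c2t} arccos((ξ² + (c2t)² − r²)/(2c2t·ξ))·ξ·(c1²t² − ξ²)^{−1/2}·exp((λ1/c1)√(c1²t² − ξ²)) dξ − (λ2 e^{−(λ1+λ2)t}/c2)·∫₀^{c2t} ζ·(c2²t² − ζ²)^{−1/2}·exp((λ2/c2)√(c2²t² − ζ²))·exp((λ1/c1)√(c1²t² − (r−ζ)²)) dζ + (1/π)·∫₀^{c2t} f2(ζ)·[∫_{r−ζ}^{r+ζ} arccos((ξ² + ζ² − r²)/(2ξζ))·f1(ξ) dξ] dζ. -/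

import Mathlib

open MeasureTheory ProbabilityTheory
open scoped ENNReal

/-- Density of the absolutely continuous part of the law of the distance from
the origin of a planar Markov random flight with speed `c` and rate `lam` at time `t`. -/
noncomputable def fac (t lam c z : ℝ) : ℝ :=
  if 0 < z ∧ z < c * t then
    (lam / c) * z / Real.sqrt (c ^ 2 * t ^ 2 - z ^ 2) *
      Real.exp (-(lam * t) + (lam / c) * Real.sqrt (c ^ 2 * t ^ 2 - z ^ 2))
  else 0

/-- The law of the distance from the origin of a planar Markov random flight:
singular part `e^{-λt}·δ_{ct}` plus absolutely continuous part with density `fac`. -/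
noncomputable def flightLaw (t lam c : ℝ) : Measure ℝ :=
  ENNReal.ofReal (Real.exp (-(lam * t))) • Measure.dirac (c * t) +
    volume.withDensity fun z => ENNReal.ofReal (fac t lam c z)

/-- The uniform probability measure on a set `s ⊆ ℝ`. -/
noncomputable def uniformMeasure (s : Set ℝ) : Measure ℝ :=
  (volume s)⁻¹ • volume.restrict s

/-- The Euclidean distance between the two flights, expressed through the radii
`R1, R2` and the angle `Θ` via the law of cosines. -/
noncomputable def rho {Ω : Type*} (R1 R2 Θ : Ω → ℝ) (ω : Ω) : ℝ :=
  Real.sqrt (R1 ω ^ 2 + R2 ω ^ 2 - 2 * R1 ω * R2 ω * Real.cos (Θ ω))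


/-!
Given the radii `x` of the faster and `y` of the slower flight, `ρ < r` has probability
`arccos ((x² + y² - r²) / (2xy)) / π`. When `c₂t < r ≤ (c₁ - c₂)t`, the atom of the faster
flight at `c₁t` never comes within `r`, and on its absolutely continuous part this angle
probability is `1` for `x ≤ r - y` and `0` for `x ≥ r + y`. The density integrates in closed
form up to `r - y`; integrating the result against the law of the slower flight (atom at `c₂t`
plus density) yields the four terms of `H₁`.
-/

section Density

open Real Set

variable {t lam c : ℝ}

lemma fac_nonneg (hl : 0 < lam) (hc : 0 < c) (z : ℝ) : 0 ≤ fac t lam c z := by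
  unfold fac
  split_ifs with h
  · have := h.1
    positivity
  · rfl

lemma fac_eq_zero_of_notMem {z : ℝ} (h : z ∉ Ioo 0 (c * t)) : fac t lam c z = 0 :=
  if_neg h

/-- At `z = c * t` both sides vanish, the right one through `x / 0 = 0`. -/
lemma fac_eq_of_mem_Icc {z : ℝ} (hz : z ∈ Icc 0 (c * t)) :
    fac t lam c z = lam / c * z / √(c ^ 2 * t ^ 2 - z ^ 2) *
      exp (-(lam * t) + lam / c * √(c ^ 2 * t ^ 2 - z ^ 2)) := by
  rcases hz.1.eq_or_lt with rfl | hz0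
  · simp [fac]
  rcases hz.2.eq_or_lt with h | hzc
  · simp [fac, h, mul_pow]
  · exact if_pos ⟨hz0, hzc⟩

lemma measurable_fac : Measurable (fac t lam c) :=
  Measurable.ite measurableSet_Ioo (by fun_prop) measurable_const

lemma hasDerivAt_neg_exp_sqrt (hc : 0 < c) {x : ℝ} (hx : x ∈ Ioo 0 (c * t)) :
    HasDerivAt (fun x => -exp (-(lam * t) + lam / c * √(c ^ 2 * t ^ 2 - x ^ 2)))
      (fac t lam c x) x := by
  obtain ⟨hx0, hxc⟩ := hx
  have hpos : 0 < c ^ 2 * t ^ 2 - x ^ 2 := by nlinarith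
  have hsqrt : HasDerivAt (fun x => √(c ^ 2 * t ^ 2 - x ^ 2))
      (-(2 * x) / (2 * √(c ^ 2 * t ^ 2 - x ^ 2))) x :=
    (((hasDerivAt_pow 2 x).const_sub _).congr_deriv (by ring)).sqrt hpos.ne'
  refine (((hsqrt.const_mul (lam / c)).const_add (-(lam * t))).exp.neg).congr_deriv ?_
  rw [fac, if_pos ⟨hx0, hxc⟩]
  field_simp

lemma integrable_fac (hl : 0 < lam) (hc : 0 < c) : Integrable (fac t lam c) := by
  have hOn : IntegrableOn (fac t lam c) (Ioc 0 (c * t)) :=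
    intervalIntegral.integrableOn_deriv_of_nonneg (by fun_prop)
      (fun x hx => hasDerivAt_neg_exp_sqrt hc hx) (fun x _ => fac_nonneg hl hc x)
  refine (integrableOn_iff_integrable_of_support_subset fun x hx => ?_).mp hOn
  by_contra hx'
  exact hx (fac_eq_zero_of_notMem fun h => hx' (Ioo_subset_Ioc_self h))

lemma integrable_fac_mul (hl : 0 < lam) (hc : 0 < c) {h : ℝ → ℝ} (hh : AEStronglyMeasurable h)
    {C : ℝ} (hC : ∀ x, ‖h x‖ ≤ C) : Integrable fun x => fac t lam c x * h x :=
  (integrable_fac hl hc).mul_bdd hh (ae_of_all _ hC)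

lemma integral_fac_mul (hct : 0 ≤ c * t) (h : ℝ → ℝ) :
    ∫ x, fac t lam c x * h x = ∫ x in 0..c * t, fac t lam c x * h x := by
  rw [intervalIntegral.integral_of_le hct, setIntegral_eq_integral_of_forall_compl_eq_zero]
  intro x hx
  rw [fac_eq_zero_of_notMem fun h => hx (Ioo_subset_Ioc_self h), zero_mul]

lemma integral_fac_of_le (hl : 0 < lam) (hc : 0 < c) {x : ℝ} (hx0 : 0 ≤ x) (hx : x ≤ c * t) :
    ∫ z in 0..x, fac t lam c z = 1 - exp (-(lam * t) + lam / c * √(c ^ 2 * t ^ 2 - x ^ 2)) := by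
  rw [intervalIntegral.integral_eq_sub_of_hasDerivAt_of_le hx0 (by fun_prop)
    (fun z hz => hasDerivAt_neg_exp_sqrt hc ⟨hz.1, hz.2.trans_le hx⟩)
    (integrable_fac hl hc).intervalIntegrable]
  have hfull : lam / c * √(c ^ 2 * t ^ 2 - 0 ^ 2) = lam * t := by
    rw [zero_pow two_ne_zero, sub_zero, ← mul_pow, sqrt_sq (hx0.trans hx)]
    field_simp
  rw [hfull, neg_add_cancel, exp_zero]
  ring

lemma integral_fac (hl : 0 < lam) (hc : 0 < c) (hct : 0 ≤ c * t) :
    ∫ z in 0..c * t, fac t lam c z = 1 - exp (-(lam * t)) := by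
  rw [integral_fac_of_le hl hc hct le_rfl, ← mul_pow, sub_self, sqrt_zero, mul_zero, add_zero]

end Density

section Angle

open Real Set

lemma cos_gt_inter_Ioo_pi (v : ℝ) : {θ | v < cos θ} ∩ Ioo 0 π = Ioo 0 (arccos v) := by
  ext θ
  constructor
  · rintro ⟨hv, h0, hπ⟩
    refine ⟨h0, ?_⟩
    rcases lt_or_ge v (-1) with hv1 | hv1
    · rwa [arccos_eq_pi.2 hv1.le]
    · calc θ = arccos (cos θ) := (arccos_cos h0.le hπ.le).symm
        _ < arccos v := arccos_lt_arccos hv1 hv (cos_le_one θ)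
  · rintro ⟨h0, hθ⟩
    have hπ : θ < π := hθ.trans_le (arccos_le_pi v)
    refine ⟨show v < cos θ from ?_, h0, hπ⟩
    by_contra! hv
    have := arccos_le_arccos hv
    rw [arccos_cos h0.le hπ.le] at this
    exact this.not_gt hθ

lemma uniformMeasure_cos_gt (v : ℝ) :
    uniformMeasure (Ioo 0 π) {θ | v < cos θ} = ENNReal.ofReal (arccos v / π) := by
  rw [uniformMeasure, Measure.smul_apply, Measure.restrict_apply' measurableSet_Ioo,
    cos_gt_inter_Ioo_pi, Real.volume_Ioo, Real.volume_Ioo, sub_zero, sub_zero, smul_eq_mul,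
    ← ENNReal.ofReal_inv_of_pos pi_pos, ← ENNReal.ofReal_mul (by positivity), inv_mul_eq_div]

/-- `P(√(x² + y² - 2xy cos Θ) < r)` for `Θ` uniform on `(0, π)`
(see `uniformMeasure_dist_lt`). -/
noncomputable def angleProb (r x y : ℝ) : ℝ :=
  arccos ((x ^ 2 + y ^ 2 - r ^ 2) / (2 * x * y)) / π

lemma angleProb_nonneg (r x y : ℝ) : 0 ≤ angleProb r x y :=
  div_nonneg (arccos_nonneg _) pi_pos.le

lemma angleProb_le_one (r x y : ℝ) : angleProb r x y ≤ 1 :=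
  (div_le_one pi_pos).2 (arccos_le_pi _)

lemma measurable_angleProb (r : ℝ) : Measurable fun p : ℝ × ℝ => angleProb r p.1 p.2 := by
  unfold angleProb
  fun_prop

lemma angleProb_eq_one {r x y : ℝ} (hx : 0 < x) (hy : 0 < y) (h : x + y ≤ r) :
    angleProb r x y = 1 := by
  rw [angleProb, arccos_eq_pi.2, div_self pi_ne_zero]
  rw [div_le_iff₀ (by positivity)]
  nlinarith

lemma angleProb_eq_zero {r x y : ℝ} (hx : 0 < x) (hy : 0 < y) (hr : 0 ≤ r) (h : r ≤ x - y) :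
    angleProb r x y = 0 := by
  rw [angleProb, arccos_eq_zero.2, zero_div]
  rw [le_div_iff₀ (by positivity)]
  nlinarith

lemma uniformMeasure_dist_lt {r x y : ℝ} (hr : 0 < r) (hx : 0 < x) (hy : 0 < y) :
    uniformMeasure (Ioo 0 π) {θ | √(x ^ 2 + y ^ 2 - 2 * x * y * cos θ) < r}
      = ENNReal.ofReal (angleProb r x y) := by
  have hset : {θ | √(x ^ 2 + y ^ 2 - 2 * x * y * cos θ) < r}
      = {θ | (x ^ 2 + y ^ 2 - r ^ 2) / (2 * x * y) < cos θ} := by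
    ext θ
    change _ < r ↔ _ < cos θ
    rw [sqrt_lt' hr, div_lt_iff₀ (by positivity)]
    constructor <;> intro h <;> linarith
  rw [hset, uniformMeasure_cos_gt, angleProb]

end Angle

section FlightLaw

open Real Set

variable {t lam c : ℝ}

lemma lintegral_flightLaw (g : ℝ → ℝ≥0∞) :
    ∫⁻ x, g x ∂flightLaw t lam c
      = ENNReal.ofReal (exp (-(lam * t))) * g (c * t)
        + ∫⁻ x, ENNReal.ofReal (fac t lam c x) * g x := by
  rw [flightLaw, lintegral_add_measure, lintegral_smul_measure, lintegral_dirac,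
    lintegral_withDensity_eq_lintegral_mul_non_measurable _ measurable_fac.ennreal_ofReal
      (ae_of_all _ fun _ => ENNReal.ofReal_lt_top)]
  rfl

lemma lintegral_flightLaw_eq_ofReal (ht : 0 < t) (hl : 0 < lam) (hc : 0 < c)
    {g : ℝ → ℝ≥0∞} {h : ℝ → ℝ}
    (hg : ∀ y ∈ Ioc 0 (c * t), g y = ENNReal.ofReal (h y))
    (hh : ∀ y, 0 ≤ h y) (hint : Integrable fun y => fac t lam c y * h y) :
    ∫⁻ y, g y ∂flightLaw t lam c
      = ENNReal.ofReal (exp (-(lam * t)) * h (c * t) + ∫ y, fac t lam c y * h y) := by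
  have hac (y : ℝ) :
      ENNReal.ofReal (fac t lam c y) * g y = ENNReal.ofReal (fac t lam c y * h y) := by
    by_cases hy : y ∈ Ioo 0 (c * t)
    · rw [hg y (Ioo_subset_Ioc_self hy), ENNReal.ofReal_mul (fac_nonneg hl hc y)]
    · simp [fac_eq_zero_of_notMem hy]
  have hfh (y : ℝ) : 0 ≤ fac t lam c y * h y := mul_nonneg (fac_nonneg hl hc y) (hh y)
  rw [lintegral_flightLaw, hg _ ⟨by positivity, le_rfl⟩, lintegral_congr hac,
    ← ofReal_integral_eq_lintegral_ofReal hint (ae_of_all _ hfh),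
    ← ENNReal.ofReal_mul (exp_pos _).le,
    ← ENNReal.ofReal_add (mul_nonneg (exp_pos _).le (hh _)) (integral_nonneg hfh)]

end FlightLaw

section AcCondCdf

open Real Set

variable {t lam c : ℝ}

/-- The probability that `ρ < r` and the first flight is in its absolutely continuous part,
given that the second flight is at radius `y`. -/
noncomputable def acCondCdf (t lam c r y : ℝ) : ℝ :=
  ∫ x, fac t lam c x * angleProb r x y

lemma integrable_fac_mul_angleProb (hl : 0 < lam) (hc : 0 < c) (r y : ℝ) :
    Integrable fun x => fac t lam c x * angleProb r x y :=
  integrable_fac_mul hl hc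
    ((measurable_angleProb r).comp (measurable_id.prodMk measurable_const)).aestronglyMeasurable
    fun x => by rw [norm_of_nonneg (angleProb_nonneg r x y)]; exact angleProb_le_one r x y

lemma acCondCdf_nonneg (hl : 0 < lam) (hc : 0 < c) (r y : ℝ) : 0 ≤ acCondCdf t lam c r y :=
  integral_nonneg fun x => mul_nonneg (fac_nonneg hl hc x) (angleProb_nonneg r x y)

lemma norm_acCondCdf_le (hl : 0 < lam) (hc : 0 < c) (r y : ℝ) :
    ‖acCondCdf t lam c r y‖ ≤ ∫ x, fac t lam c x := by
  rw [norm_of_nonneg (acCondCdf_nonneg hl hc r y)]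
  refine integral_mono (integrable_fac_mul_angleProb hl hc r y) (integrable_fac hl hc) fun x => ?_
  exact mul_le_of_le_one_right (fac_nonneg hl hc x) (angleProb_le_one r x y)

lemma stronglyMeasurable_acCondCdf (r : ℝ) : StronglyMeasurable (acCondCdf t lam c r) :=
  StronglyMeasurable.integral_prod_right'
    (f := fun p : ℝ × ℝ => fac t lam c p.2 * angleProb r p.2 p.1)
    ((measurable_fac.comp measurable_snd).mul
      ((measurable_angleProb r).comp measurable_swap)).stronglyMeasurable

lemma lintegral_flightLaw_uniformMeasure_dist_lt (ht : 0 < t) (hl : 0 < lam) (hc : 0 < c)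
    {r y : ℝ} (hr : 0 < r) (hy : 0 < y) (hryc : r + y ≤ c * t) :
    ∫⁻ x, uniformMeasure (Ioo 0 π) {θ | √(x ^ 2 + y ^ 2 - 2 * x * y * cos θ) < r}
        ∂flightLaw t lam c
      = ENNReal.ofReal (acCondCdf t lam c r y) := by
  rw [lintegral_flightLaw_eq_ofReal ht hl hc (fun x hx => uniformMeasure_dist_lt hr hx.1 hy)
    (angleProb_nonneg r · y) (integrable_fac_mul_angleProb hl hc r y),
    angleProb_eq_zero (by positivity) hy hr.le (by linarith), mul_zero, zero_add, acCondCdf]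

lemma acCondCdf_eq (hl : 0 < lam) (hc : 0 < c) {r y : ℝ} (hy : 0 < y) (hyr : y < r)
    (hryc : r + y ≤ c * t) :
    acCondCdf t lam c r y
      = 1 - exp (-(lam * t) + lam / c * √(c ^ 2 * t ^ 2 - (r - y) ^ 2))
        + (∫ x in r - y..r + y,
            arccos ((x ^ 2 + y ^ 2 - r ^ 2) / (2 * x * y)) * fac t lam c x) / π := by
  have hii (a b : ℝ) :
      IntervalIntegrable (fun x => fac t lam c x * angleProb r x y) volume a b :=
    (integrable_fac_mul_angleProb hl hc r y).intervalIntegrable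
  have hnear : ∫ x in 0..r - y, fac t lam c x * angleProb r x y
      = 1 - exp (-(lam * t) + lam / c * √(c ^ 2 * t ^ 2 - (r - y) ^ 2)) := by
    rw [← integral_fac_of_le hl hc (by linarith) (by linarith)]
    refine intervalIntegral.integral_congr fun x hx => ?_
    rw [uIcc_of_le (by linarith)] at hx
    rcases hx.1.eq_or_lt with rfl | hx0
    · simp [fac_eq_zero_of_notMem (lt_irrefl 0 ∘ And.left)]
    · simp only [angleProb_eq_one (r := r) hx0 hy (by linarith [hx.2]), mul_one]
  have hmid : ∫ x in r - y..r + y, fac t lam c x * angleProb r x y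
      = (∫ x in r - y..r + y,
          arccos ((x ^ 2 + y ^ 2 - r ^ 2) / (2 * x * y)) * fac t lam c x) / π := by
    rw [← intervalIntegral.integral_div]
    refine intervalIntegral.integral_congr fun x _ => ?_
    simp only [angleProb]
    ring
  have hfar : ∫ x in r + y..c * t, fac t lam c x * angleProb r x y = 0 := by
    refine (intervalIntegral.integral_congr fun x hx => ?_).trans intervalIntegral.integral_zero
    rw [uIcc_of_le hryc] at hx
    have hx0 : 0 < x := by linarith [hx.1]
    simp only [angleProb_eq_zero (r := r) hx0 hy (by linarith) (by linarith [hx.1]), mul_zero]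
  rw [acCondCdf, integral_fac_mul (by linarith),
    ← intervalIntegral.integral_add_adjacent_intervals (hii 0 (r - y)) (hii (r - y) (c * t)),
    ← intervalIntegral.integral_add_adjacent_intervals (hii (r - y) (r + y))
      (hii (r + y) (c * t)), hnear, hmid, hfar, add_zero]

end AcCondCdf

section Independence

variable {Ω β : Type*} [MeasurableSpace Ω] [MeasurableSpace β] {μ : Measure Ω}
  [IsProbabilityMeasure μ] {X Y Z : Ω → β}

lemma map_prodMk_prodMk_eq_prod_of_iIndepFun (hX : Measurable X) (hY : Measurable Y)
    (hZ : Measurable Z) (hind : iIndepFun ![X, Y, Z] μ) :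
    μ.map (fun ω => ((X ω, Y ω), Z ω)) = ((μ.map X).prod (μ.map Y)).prod (μ.map Z) := by
  have hm : ∀ i, Measurable (![X, Y, Z] i) := by
    intro i
    fin_cases i <;> assumption
  have hXY : IndepFun X Y μ := hind.indepFun (i := 0) (j := 1) (by decide)
  have hXYZ : IndepFun (fun ω => (X ω, Y ω)) Z μ :=
    hind.indepFun_prodMk hm 0 1 2 (by decide) (by decide)
  rw [← hXY.map_prod_eq_prod_map_map hX.aemeasurable hY.aemeasurable]
  exact hXYZ.map_prod_eq_prod_map_map (hX.prodMk hY).aemeasurable hZ.aemeasurable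

lemma measure_preimage_eq_lintegral_lintegral_of_iIndepFun (hX : Measurable X)
    (hY : Measurable Y) (hZ : Measurable Z) (hind : iIndepFun ![X, Y, Z] μ)
    {S : Set ((β × β) × β)} (hS : MeasurableSet S) :
    μ ((fun ω => ((X ω, Y ω), Z ω)) ⁻¹' S)
      = ∫⁻ y, ∫⁻ x, μ.map Z (Prod.mk (x, y) ⁻¹' S) ∂μ.map X ∂μ.map Y := by
  rw [← Measure.map_apply ((hX.prodMk hY).prodMk hZ) hS,
    map_prodMk_prodMk_eq_prod_of_iIndepFun hX hY hZ hind, Measure.prod_apply hS,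
    lintegral_prod_symm _ (measurable_measure_prodMk_left hS).aemeasurable]

end Independence

section TwoFlights

open Real Set

variable {t l1 l2 c1 c2 r : ℝ}

lemma integrable_fac_mul_acCondCdf (hl1 : 0 < l1) (hl2 : 0 < l2) (hc1 : 0 < c1) (hc2 : 0 < c2)
    (r : ℝ) : Integrable fun y => fac t l2 c2 y * acCondCdf t l1 c1 r y :=
  integrable_fac_mul hl2 hc2 (stronglyMeasurable_acCondCdf r).aestronglyMeasurable
    (norm_acCondCdf_le hl1 hc1 r)

lemma intervalIntegral_arccos_mul_fac {y : ℝ} (hy : 0 < y) (hyr : y < r)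
    (hryc : r + y ≤ c1 * t) :
    (∫ x in r - y..r + y, arccos ((x ^ 2 + y ^ 2 - r ^ 2) / (2 * x * y)) * fac t l1 c1 x) / π
      = l1 * exp (-(l1 * t)) / (π * c1) *
        ∫ x in r - y..r + y, arccos ((x ^ 2 + y ^ 2 - r ^ 2) / (2 * y * x)) *
          (x / √(c1 ^ 2 * t ^ 2 - x ^ 2)) * exp (l1 / c1 * √(c1 ^ 2 * t ^ 2 - x ^ 2)) := by
  rw [← intervalIntegral.integral_div, ← intervalIntegral.integral_const_mul]
  refine intervalIntegral.integral_congr fun x hx => ?_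
  rw [uIcc_of_le (by linarith)] at hx
  simp only [fac_eq_of_mem_Icc ⟨by linarith [hx.1], hx.2.trans hryc⟩, exp_add,
    mul_right_comm 2 y x]
  ring

lemma intervalIntegral_fac_mul_exp (hct : 0 ≤ c2 * t) :
    ∫ ζ in 0..c2 * t,
        fac t l2 c2 ζ * exp (-(l1 * t) + l1 / c1 * √(c1 ^ 2 * t ^ 2 - (r - ζ) ^ 2))
      = l2 * exp (-((l1 + l2) * t)) / c2 *
          ∫ ζ in 0..c2 * t, ζ / √(c2 ^ 2 * t ^ 2 - ζ ^ 2) *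
            exp (l2 / c2 * √(c2 ^ 2 * t ^ 2 - ζ ^ 2)) *
            exp (l1 / c1 * √(c1 ^ 2 * t ^ 2 - (r - ζ) ^ 2)) := by
  rw [← intervalIntegral.integral_const_mul]
  refine intervalIntegral.integral_congr fun ζ hζ => ?_
  rw [uIcc_of_le hct] at hζ
  simp only [fac_eq_of_mem_Icc hζ, add_mul, neg_add, exp_add]
  ring

lemma integral_fac_mul_acCondCdf (ht : 0 < t) (hl1 : 0 < l1) (hl2 : 0 < l2) (hc1 : 0 < c1)
    (hc2 : 0 < c2) (hr0 : c2 * t < r) (hr : r + c2 * t ≤ c1 * t) :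
    ∫ y, fac t l2 c2 y * acCondCdf t l1 c1 r y
      = 1 - exp (-(l2 * t))
        - l2 * exp (-((l1 + l2) * t)) / c2 *
          (∫ ζ in 0..c2 * t, ζ / √(c2 ^ 2 * t ^ 2 - ζ ^ 2) *
            exp (l2 / c2 * √(c2 ^ 2 * t ^ 2 - ζ ^ 2)) *
            exp (l1 / c1 * √(c1 ^ 2 * t ^ 2 - (r - ζ) ^ 2)))
        + 1 / π * ∫ ζ in 0..c2 * t, fac t l2 c2 ζ * ∫ ξ in r - ζ..r + ζ,
            arccos ((ξ ^ 2 + ζ ^ 2 - r ^ 2) / (2 * ξ * ζ)) * fac t l1 c1 ξ := by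
  have hct : 0 ≤ c2 * t := by positivity
  have hf2 : IntervalIntegrable (fac t l2 c2) volume 0 (c2 * t) :=
    (integrable_fac hl2 hc2).intervalIntegrable
  have hf2E : IntervalIntegrable (fun ζ => fac t l2 c2 ζ *
      exp (-(l1 * t) + l1 / c1 * √(c1 ^ 2 * t ^ 2 - (r - ζ) ^ 2))) volume 0 (c2 * t) :=
    hf2.mul_continuousOn (by fun_prop)
  -- The double-integral term is isolated as a difference, so that its integrability in `ζ`
  -- never has to be proved directly.
  have hsplit : EqOn
      (fun ζ => 1 / π * (fac t l2 c2 ζ * ∫ ξ in r - ζ..r + ζ,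
        arccos ((ξ ^ 2 + ζ ^ 2 - r ^ 2) / (2 * ξ * ζ)) * fac t l1 c1 ξ))
      (fun ζ => fac t l2 c2 ζ * acCondCdf t l1 c1 r ζ - (fac t l2 c2 ζ - fac t l2 c2 ζ *
        exp (-(l1 * t) + l1 / c1 * √(c1 ^ 2 * t ^ 2 - (r - ζ) ^ 2))))
      (uIcc 0 (c2 * t)) := by
    intro ζ hζ
    rw [uIcc_of_le hct] at hζ
    rcases hζ.1.eq_or_lt with rfl | hζ0
    · simp [fac_eq_zero_of_notMem (lt_irrefl 0 ∘ And.left)]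
    · simp only [acCondCdf_eq (t := t) (r := r) hl1 hc1 hζ0 (by linarith [hζ.2])
        (by linarith [hζ.2])]
      ring
  have key := intervalIntegral.integral_congr (μ := volume) hsplit
  rw [intervalIntegral.integral_const_mul, intervalIntegral.integral_sub
      (integrable_fac_mul_acCondCdf hl1 hl2 hc1 hc2 r).intervalIntegrable (hf2.sub hf2E),
    intervalIntegral.integral_sub hf2 hf2E, integral_fac hl2 hc2 hct,
    intervalIntegral_fac_mul_exp hct] at key
  rw [integral_fac_mul hct]
  linarith

end TwoFlights

theorem distance_cdf_H1_general {Ω : Type*} [MeasureSpace Ω] [IsProbabilityMeasure (ℙ : Measure Ω)]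
    (t l1 l2 c1 c2 : ℝ) (ht : 0 < t) (hl1 : 0 < l1) (hl2 : 0 < l2)
    (hc2 : 0 < c2) (hc12 : c2 ≤ c1)
    (R1 R2 Θ : Ω → ℝ) (hmR1 : Measurable R1) (hmR2 : Measurable R2) (hmΘ : Measurable Θ)
    (hind : iIndepFun ![R1, R2, Θ] ℙ)
    (hR1 : Measure.map R1 ℙ = flightLaw t l1 c1)
    (hR2 : Measure.map R2 ℙ = flightLaw t l2 c2)
    (hΘ : Measure.map Θ ℙ = uniformMeasure (Set.Ioo 0 Real.pi))
    (r : ℝ) (hr0 : c2 * t < r) (hr : r ≤ (c1 - c2) * t) :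
    ℙ {ω | rho R1 R2 Θ ω < r}
      = ENNReal.ofReal
        (1 - Real.exp (-((l1 + l2) * t)) * Real.exp ((l1 / c1) * Real.sqrt (c1 ^ 2 * t ^ 2 - (r - c2 * t) ^ 2))
        + l1 * Real.exp (-((l1 + l2) * t)) / (Real.pi * c1) *
          (∫ ξ in (r - c2 * t)..(r + c2 * t),
            Real.arccos ((ξ ^ 2 + (c2 * t) ^ 2 - r ^ 2) / (2 * (c2 * t) * ξ)) *
              (ξ / Real.sqrt (c1 ^ 2 * t ^ 2 - ξ ^ 2)) *
              Real.exp ((l1 / c1) * Real.sqrt (c1 ^ 2 * t ^ 2 - ξ ^ 2)))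
        - l2 * Real.exp (-((l1 + l2) * t)) / c2 *
          (∫ ζ in (0:ℝ)..(c2 * t),
            ζ / Real.sqrt (c2 ^ 2 * t ^ 2 - ζ ^ 2) *
              Real.exp ((l2 / c2) * Real.sqrt (c2 ^ 2 * t ^ 2 - ζ ^ 2)) *
              Real.exp ((l1 / c1) * Real.sqrt (c1 ^ 2 * t ^ 2 - (r - ζ) ^ 2)))
        + (1 / Real.pi) *
          (∫ ζ in (0:ℝ)..(c2 * t), fac t l2 c2 ζ *
            ∫ ξ in (r - ζ)..(r + ζ),
              Real.arccos ((ξ ^ 2 + ζ ^ 2 - r ^ 2) / (2 * ξ * ζ)) * fac t l1 c1 ξ)) := by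
  have hc1 : 0 < c1 := hc2.trans_le hc12
  have hct : 0 < c2 * t := mul_pos hc2 ht
  have hfar : r + c2 * t ≤ c1 * t := by linarith
  have hS : MeasurableSet {p : (ℝ × ℝ) × ℝ |
      √(p.1.1 ^ 2 + p.1.2 ^ 2 - 2 * p.1.1 * p.1.2 * Real.cos p.2) < r} :=
    measurableSet_lt (by fun_prop) measurable_const
  refine (measure_preimage_eq_lintegral_lintegral_of_iIndepFun hmR1 hmR2 hmΘ hind hS).trans ?_
  simp only [Set.preimage_ofPred_eq]
  rw [hR1, hR2, hΘ, lintegral_flightLaw_eq_ofReal ht hl2 hc2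
      (fun y hy => lintegral_flightLaw_uniformMeasure_dist_lt ht hl1 hc1 (hct.trans hr0) hy.1
        (by linarith [hy.2]))
      (acCondCdf_nonneg hl1 hc1 r) (integrable_fac_mul_acCondCdf hl1 hl2 hc1 hc2 r),
    integral_fac_mul_acCondCdf ht hl1 hl2 hc1 hc2 hr0 hfar, acCondCdf_eq hl1 hc1 hct hr0 hfar,
    intervalIntegral_arccos_mul_fac hct hr0 hfar]
  congr 1
  rw [Real.exp_add, show -((l1 + l2) * t) = -(l1 * t) + -(l2 * t) by ring, Real.exp_add]
  ring

theorem distance_cdf_H1 {Ω : Type*} [MeasureSpace Ω] [IsProbabilityMeasure (ℙ : Measure Ω)]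
    (t l1 l2 c1 c2 : ℝ) (ht : 0 < t) (hl1 : 0 < l1) (hl2 : 0 < l2)
    (hc2 : 0 < c2) (hc12 : c2 ≤ c1)
    (R1 R2 Θ : Ω → ℝ) (hmR1 : Measurable R1) (hmR2 : Measurable R2) (hmΘ : Measurable Θ)
    (hind : iIndepFun ![R1, R2, Θ] ℙ)
    (hR1 : Measure.map R1 ℙ = flightLaw t l1 c1)
    (hR2 : Measure.map R2 ℙ = flightLaw t l2 c2)
    (hΘ : Measure.map Θ ℙ = uniformMeasure (Set.Ioo 0 Real.pi)) (hcc : 2 * c2 < c1)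
    (r : ℝ) (hr0 : c2 * t < r) (hr : r ≤ (c1 - c2) * t) :
    ℙ {ω | rho R1 R2 Θ ω < r}
      = ENNReal.ofReal
        (1 - Real.exp (-((l1 + l2) * t)) * Real.exp ((l1 / c1) * Real.sqrt (c1 ^ 2 * t ^ 2 - (r - c2 * t) ^ 2))
        + l1 * Real.exp (-((l1 + l2) * t)) / (Real.pi * c1) *
          (∫ ξ in (r - c2 * t)..(r + c2 * t),
            Real.arccos ((ξ ^ 2 + (c2 * t) ^ 2 - r ^ 2) / (2 * (c2 * t) * ξ)) *
              (ξ / Real.sqrt (c1 ^ 2 * t ^ 2 - ξ ^ 2)) *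
              Real.exp ((l1 / c1) * Real.sqrt (c1 ^ 2 * t ^ 2 - ξ ^ 2)))
        - l2 * Real.exp (-((l1 + l2) * t)) / c2 *
          (∫ ζ in (0:ℝ)..(c2 * t),
            ζ / Real.sqrt (c2 ^ 2 * t ^ 2 - ζ ^ 2) *
              Real.exp ((l2 / c2) * Real.sqrt (c2 ^ 2 * t ^ 2 - ζ ^ 2)) *
              Real.exp ((l1 / c1) * Real.sqrt (c1 ^ 2 * t ^ 2 - (r - ζ) ^ 2)))
        + (1 / Real.pi) *
          (∫ ζ in (0:ℝ)..(c2 * t), fac t l2 c2 ζ *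
            ∫ ξ in (r - ζ)..(r + ζ),
              Real.arccos ((ξ ^ 2 + ζ ^ 2 - r ^ 2) / (2 * ξ * ζ)) * fac t l1 c1 ξ)) :=
  distance_cdf_H1_general t l1 l2 c1 c2 ht hl1 hl2 hc2 hc12 R1 R2 Θ hmR1 hmR2 hmΘ hind hR1 hR2 hΘ r
    hr0 hr
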